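/- Let d ≥ 1 and n ≥ 1 be integers. The union of the Kuhn simplices k(v,π), taken over all admissible pairs (v,π) for n, equals S^n = {x ∈ ℝ^d : n ≥ x_1 ≥ x_2 ≥ … ≥ x_d ≥ 0}. -/

import Mathlib

/-- The right `d`-simplex `S^α = {x ∈ ℝ^d : α ≥ x_1 ≥ x_2 ≥ … ≥ x_d ≥ 0}`
(coordinates indexed by `Fin d`, in order). -/
def Sset (d : ℕ) (α : ℝ) : Set (Fin d → ℝ) :=
  {x | (∀ i : Fin d, 0 ≤ x i ∧ x i ≤ α) ∧ ∀ i j : Fin d, i ≤ j → x j ≤ x i}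

/-- The Kuhn simplex `k(v,π) = {x : 1 ≥ (x−v)_{π(1)} ≥ … ≥ (x−v)_{π(d)} ≥ 0}`. -/
def kuhn (d : ℕ) (v : Fin d → ℝ) (π : Equiv.Perm (Fin d)) : Set (Fin d → ℝ) :=
  {x | (∀ i : Fin d, 0 ≤ x (π i) - v (π i) ∧ x (π i) - v (π i) ≤ 1) ∧
       ∀ i j : Fin d, i ≤ j → x (π j) - v (π j) ≤ x (π i) - v (π i)}

/-- `(v,π)` with `v ∈ ℤ^d` is admissible for `m` if `v ∈ S^{m-1}` and whenever
`v_j = v_{j+1}`, `j` precedes `j+1` in `π`, i.e. `π⁻¹(j) < π⁻¹(j+1)`. -/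
def admissible (d m : ℕ) (v : Fin d → ℤ) (π : Equiv.Perm (Fin d)) : Prop :=
  ((fun i => (v i : ℝ)) ∈ Sset d ((m : ℝ) - 1)) ∧
  ∀ (j : Fin d) (h : (j : ℕ) + 1 < d),
    v j = v ⟨(j : ℕ) + 1, h⟩ → π.symm j < π.symm ⟨(j : ℕ) + 1, h⟩


/-!
A point `x ∈ S^n` lies in the Kuhn simplex `k(v, π)` with `v_i = min ⌊x_i⌋ (n - 1)` and `π` a
stable sort of the fractional parts `x - v` in decreasing order. The clamping keeps `v ∈ S^{n-1}`
while `x - v ∈ [0, 1]`, and stability makes `(v, π)` admissible: if `v_j = v_{j+1}` then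
`x_{j+1} - v_{j+1} ≤ x_j - v_j`, so `j` comes first. Conversely, on `k(v, π)` a strict descent
`v_{j+1} < v_j` of the integer vertex already forces `x_{j+1} ≤ v_{j+1} + 1 ≤ v_j ≤ x_j`, and at a
tie `v_j = v_{j+1}` the order `π⁻¹(j) < π⁻¹(j+1)` does.
-/

lemma Fin.antitone_of_succ_le {α : Type*} [Preorder α] {d : ℕ} {g : Fin d → α}
    (h : ∀ (j : Fin d) (hj : (j : ℕ) + 1 < d), g ⟨j + 1, hj⟩ ≤ g j) : Antitone g := by
  cases d with
  | zero => exact fun i => i.elim0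
  | succ d => exact Fin.antitone_iff_succ_le.mpr fun i => h i.castSucc (by simp)

lemma exists_perm_antitone_comp {α : Type*} [LinearOrder α] {d : ℕ} (f : Fin d → α) :
    ∃ π : Equiv.Perm (Fin d), Antitone (f ∘ π) ∧
      ∀ ⦃i j : Fin d⦄, i < j → f j ≤ f i → π.symm i < π.symm j := by
  set π := Tuple.sort (OrderDual.toDual ∘ f)
  obtain ⟨hmono, hstable⟩ := (Tuple.eq_sort_iff (σ := π)).mp rfl
  have hanti : Antitone (f ∘ π) := monotone_toDual_comp_iff.mp hmono
  refine ⟨π, hanti, fun i j hij hfji => ?_⟩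
  by_contra! hji
  have hlt : π.symm j < π.symm i :=
    hji.lt_of_ne fun h => hij.ne (π.symm.injective h.symm)
  have hfij : f i ≤ f j := by simpa using hanti hlt.le
  have hji' := hstable _ _ hlt (by simpa using le_antisymm hfji hfij)
  simp only [Equiv.apply_symm_apply] at hji'
  exact hji'.not_gt hij

section

variable {d : ℕ} {x : Fin d → ℝ} {v : Fin d → ℤ} {π : Equiv.Perm (Fin d)}

lemma sub_mem_Icc_of_mem_kuhn (hx : x ∈ kuhn d (fun i => (v i : ℝ)) π) (i : Fin d) :
    x i - v i ∈ Set.Icc 0 1 := by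
  simpa using hx.1 (π.symm i)

lemma kuhn_subset_Sset_of_admissible {n : ℕ} (hadm : admissible d n v π) :
    kuhn d (fun i => (v i : ℝ)) π ⊆ Sset d n := by
  obtain ⟨⟨hv_bound, hv_anti⟩, htie⟩ := hadm
  intro x hx
  have hfrac := sub_mem_Icc_of_mem_kuhn hx
  refine ⟨fun i => ?_, ?_⟩
  · have hv_i := hv_bound i
    constructor <;> linarith [(hfrac i).1, (hfrac i).2, hv_i.1, hv_i.2]
  refine Fin.antitone_of_succ_le fun j hj => ?_
  set j' : Fin d := ⟨j + 1, hj⟩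
  rcases (Int.cast_le.mp (hv_anti j j' (Fin.le_iff_val_le_val.mpr (by simp [j'])))).eq_or_lt
    with heq | hlt
  · have hfrac_le := hx.2 _ _ (htie j hj heq.symm).le
    simp only [Equiv.apply_symm_apply] at hfrac_le
    have : (v j' : ℝ) = v j := by exact_mod_cast heq
    linarith
  · have : (v j' : ℝ) + 1 ≤ v j := by exact_mod_cast hlt
    linarith [(hfrac j).1, (hfrac j').2]

end

/-- The floor of `x` is clamped to `n - 1` so that it stays in `S^{n-1}` where `x_i = n`. -/
noncomputable def kuhnVertex {d : ℕ} (n : ℕ) (x : Fin d → ℝ) : Fin d → ℤ :=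
  fun i => min ⌊x i⌋ ((n : ℤ) - 1)

section

variable {d n : ℕ} {x : Fin d → ℝ}

lemma kuhnVertex_le (i : Fin d) : (kuhnVertex n x i : ℝ) ≤ x i :=
  (Int.cast_le.mpr (min_le_left _ _)).trans (Int.floor_le _)

lemma sub_kuhnVertex_le_one (hx : x ∈ Sset d n) (i : Fin d) : x i - kuhnVertex n x i ≤ 1 := by
  rcases min_choice ⌊x i⌋ ((n : ℤ) - 1) with h | h <;>
    simp only [kuhnVertex, h, Int.cast_sub, Int.cast_natCast, Int.cast_one]
  · linarith [Int.lt_floor_add_one (x i)]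
  · linarith [(hx.1 i).2]

lemma kuhnVertex_mem_Sset (hn : 1 ≤ n) (hx : x ∈ Sset d n) :
    (fun i => (kuhnVertex n x i : ℝ)) ∈ Sset d ((n : ℝ) - 1) := by
  refine ⟨fun i => ⟨?_, ?_⟩, fun i j hij => ?_⟩ <;> simp only [kuhnVertex]
  · exact_mod_cast le_min (Int.floor_nonneg.mpr (hx.1 i).1) (by omega)
  · exact_mod_cast min_le_right _ _
  · exact_mod_cast min_le_min_right _ (Int.floor_le_floor (hx.2 i j hij))

lemma exists_admissible_mem_kuhn (hn : 1 ≤ n) (hx : x ∈ Sset d n) :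
    ∃ π, admissible d n (kuhnVertex n x) π ∧
      x ∈ kuhn d (fun i => (kuhnVertex n x i : ℝ)) π := by
  set v := kuhnVertex n x
  obtain ⟨π, hanti, hstable⟩ := exists_perm_antitone_comp fun i => x i - v i
  refine ⟨π, ⟨kuhnVertex_mem_Sset hn hx, fun j hj hv => hstable ?_ ?_⟩, ?_, ?_⟩
  · exact Fin.lt_def.mpr (by simp)
  · have hxj : x ⟨j + 1, hj⟩ ≤ x j := hx.2 _ _ (Fin.le_iff_val_le_val.mpr (by simp))
    simp only [hv]
    linarith
  · exact fun i => ⟨sub_nonneg.mpr (kuhnVertex_le _), sub_kuhnVertex_le_one hx _⟩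
  · exact fun i j hij => hanti hij

end

theorem iUnion_admissible_kuhn_eq_Sset_general (d n : ℕ) (hn : 1 ≤ n) :
    ⋃ (v : Fin d → ℤ) (π : Equiv.Perm (Fin d)) (_ : admissible d n v π),
      kuhn d (fun i => (v i : ℝ)) π = Sset d (n : ℝ) := by
  refine Set.Subset.antisymm ?_ fun x hx => ?_
  · exact Set.iUnion₂_subset fun v π => Set.iUnion_subset kuhn_subset_Sset_of_admissible
  · obtain ⟨π, hadm, hmem⟩ := exists_admissible_mem_kuhn hn hx
    exact Set.mem_iUnion₂.mpr ⟨_, π, Set.mem_iUnion.mpr ⟨hadm, hmem⟩⟩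

/-- the union of the Kuhn simplices over all admissible pairs for `n`
equals `S^n`. -/
theorem iUnion_admissible_kuhn_eq_Sset (d n : ℕ) (hd : 1 ≤ d) (hn : 1 ≤ n) :
    ⋃ (v : Fin d → ℤ) (π : Equiv.Perm (Fin d)) (_ : admissible d n v π),
      kuhn d (fun i => (v i : ℝ)) π = Sset d (n : ℝ) :=
  iUnion_admissible_kuhn_eq_Sset_general d n hn
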